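/- For every n ≥ 0, ∑_{j=0}^{n} z^j q^{j²} qbinom(n,j;q) = ∑_{j=0}^{n} (-1)^j z^{2j} q^{j(5j-1)/2} (1 - z q^{2j}) qbinom(n,j;q) / (zq^j;q)_{n+1}, as an identity of rational functions in z, q. -/

import Mathlib

open Finset

/-- The Gaussian binomial coefficient `[n choose k]_q`. -/
def gb {K : Type*} [CommRing K] (q : K) : ℕ → ℕ → K
  | _, 0 => 1
  | 0, _+1 => 0
  | n+1, k+1 => gb q n k + q ^ (k+1) * gb q n (k+1)

/-- The Gaussian binomial coefficient with integer arguments: it vanishes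
unless `0 ≤ B ≤ A`. -/
def gbZ {K : Type*} [CommRing K] (q : K) (A B : ℤ) : K :=
  if 0 ≤ B ∧ B ≤ A then gb q A.toNat B.toNat else 0

/-- The modified Gaussian binomial coefficient: equals `1` when `A = -1` and
`B = 0`, and the ordinary Gaussian binomial coefficient otherwise. -/
def gbS {K : Type*} [CommRing K] (q : K) (A B : ℤ) : K :=
  if A = -1 ∧ B = 0 then 1 else gbZ q A B

/-! Both sides, as functions `F_n(z)`, satisfy `F_0 = 1` and
`F_{n+1}(z) = F_n(zq) + zq F_n(zq²)`. For the left side this is the q-Pascal rule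
`[n+1, j+1] = [n, j] + q^{j+1} [n, j+1]`. For the right side, after the same q-Pascal split,
the `j`-th terms agree with those of `F_n(zq) + zq F_n(zq²)` up to a difference
`C_j - C_{j+1}` (`rrCorrection`), which telescopes to `C_0 - C_{n+1} = 0`. Using the
absorption rule `(1 - q^{j+1}) [n, j+1] = (1 - q^{n-j}) [n, j]`, the termwise identity becomes
a rational identity in `z`, `q`, `q^j` and `q^{n-j}`. -/

section GaussianBinomial

variable {K : Type*} [CommRing K] (q : K)

@[simp]
theorem gb_zero_right (n : ℕ) : gb q n 0 = 1 := by
  cases n <;> rfl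

theorem gb_succ_succ (n k : ℕ) : gb q (n + 1) (k + 1) = gb q n k + q ^ (k + 1) * gb q n (k + 1) :=
  rfl

theorem gb_eq_zero_of_lt : ∀ {n k : ℕ}, n < k → gb q n k = 0
  | 0, _ + 1, _ => rfl
  | n + 1, k + 1, h => by
    rw [gb_succ_succ, gb_eq_zero_of_lt (by omega), gb_eq_zero_of_lt (by omega), mul_zero, add_zero]

theorem one_sub_pow_mul_gb_succ : ∀ n k : ℕ,
    (1 - q ^ (k + 1)) * gb q n (k + 1) = (1 - q ^ (n - k)) * gb q n k
  | 0, k => by simp [gb]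
  | n + 1, 0 => by
    have ih := one_sub_pow_mul_gb_succ n 0
    simp only [gb_succ_succ, gb_zero_right, Nat.sub_zero] at ih ⊢
    linear_combination q * ih
  | n + 1, k + 1 => by
    rcases lt_or_ge n (k + 1) with hnk | hkn
    · simp [gb_succ_succ, gb_eq_zero_of_lt q hnk, gb_eq_zero_of_lt q (show n < k + 2 by omega),
        Nat.sub_eq_zero_of_le (show n ≤ k by omega)]
    obtain ⟨m, rfl⟩ := Nat.exists_eq_add_of_le hkn
    have ih₁ := one_sub_pow_mul_gb_succ (k + 1 + m) (k + 1)
    have ih₀ := one_sub_pow_mul_gb_succ (k + 1 + m) k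
    rw [show k + 1 + m - (k + 1) = m by omega] at ih₁
    rw [show k + 1 + m - k = m + 1 by omega] at ih₀
    rw [gb_succ_succ, gb_succ_succ, show k + 1 + m + 1 - (k + 1) = m + 1 by omega]
    linear_combination q ^ (k + 2) * ih₁ + ih₀

theorem sum_mul_gb_succ (f : ℕ → K) (n : ℕ) :
    ∑ j ∈ range (n + 2), f j * gb q (n + 1) j =
      ∑ j ∈ range (n + 1), (f j * q ^ j + f (j + 1)) * gb q n j := by
  have shifted : ∑ j ∈ range (n + 1), f (j + 1) * (q ^ (j + 1) * gb q n (j + 1)) + f 0 =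
      ∑ j ∈ range (n + 1), f j * q ^ j * gb q n j := by
    rw [sum_range_succ, gb_eq_zero_of_lt q (Nat.lt_succ_self n), sum_range_succ' _ n]
    simp only [mul_assoc, mul_zero, add_zero, pow_zero, gb_zero_right, mul_one]
  rw [sum_range_succ', gb_zero_right, mul_one]
  simp only [gb_succ_succ, mul_add, add_mul, sum_add_distrib]
  rw [add_assoc, shifted, add_comm]

theorem sum_pow_mul_gb_succ (z : K) (n : ℕ) :
    ∑ j ∈ range (n + 2), z ^ j * q ^ (j ^ 2) * gb q (n + 1) j =
      ∑ j ∈ range (n + 1), (z * q) ^ j * q ^ (j ^ 2) * gb q n j +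
        z * q * ∑ j ∈ range (n + 1), (z * q ^ 2) ^ j * q ^ (j ^ 2) * gb q n j := by
  rw [sum_mul_gb_succ, mul_sum, ← sum_add_distrib]
  exact sum_congr rfl fun j _ => by ring

end GaussianBinomial

section QPochhammer

variable {K : Type*} [CommRing K]

def qPochhammer (x q : K) (m : ℕ) : K :=
  ∏ k ∈ range m, (1 - x * q ^ k)

theorem qPochhammer_succ (x q : K) (m : ℕ) :
    qPochhammer x q (m + 1) = qPochhammer x q m * (1 - x * q ^ m) :=
  prod_range_succ _ _

theorem qPochhammer_succ' (x q : K) (m : ℕ) :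
    qPochhammer x q (m + 1) = (1 - x) * qPochhammer (x * q) q m := by
  simp only [qPochhammer, prod_range_succ', pow_zero, mul_one, pow_succ', mul_assoc]
  rw [mul_comm]

theorem qPochhammer_ne_zero [IsDomain K] {x q : K} (h : ∀ k, x * q ^ k ≠ 1) (m : ℕ) :
    qPochhammer x q m ≠ 0 :=
  prod_ne_zero_iff.mpr fun k _ => sub_ne_zero.mpr (h k).symm

end QPochhammer

section RogersRamanujan

variable {K : Type*} [Field K] (q : K)

def rrCoeff (z : K) (j : ℕ) : K :=
  (-1) ^ j * z ^ (2 * j) * q ^ (j * (5 * j - 1) / 2)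

def rrWeight (z : K) (N j : ℕ) : K :=
  rrCoeff q z j * (1 - z * q ^ (2 * j)) / qPochhammer (z * q ^ j) q N

def rrCorrection (z : K) (n j : ℕ) : K :=
  rrCoeff q z j * q ^ j * ((1 - q ^ j) * gb q n j) / qPochhammer (z * q ^ j) q (n + 2)

theorem rrCoeff_succ (z : K) (j : ℕ) :
    rrCoeff q z (j + 1) = -(z ^ 2 * (q ^ j) ^ 5 * q ^ 2) * rrCoeff q z j := by
  have hexp : (j + 1) * (5 * (j + 1) - 1) / 2 = j * (5 * j - 1) / 2 + (5 * j + 2) := by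
    rw [← Nat.add_mul_div_left _ _ two_pos]
    congr 1
    rcases j with _ | j
    · rfl
    · rw [show 5 * (j + 1 + 1) - 1 = 5 * j + 9 by omega, show 5 * (j + 1) - 1 = 5 * j + 4 by omega]
      ring
  rw [rrCoeff, rrCoeff, hexp]
  ring

theorem rrCoeff_mul_pow (z : K) (a j : ℕ) :
    rrCoeff q (z * q ^ a) j = (q ^ j) ^ (2 * a) * rrCoeff q z j := by
  simp only [rrCoeff]
  ring

variable {q} {z : K}

theorem rrWeight_pascal (h : ∀ m, z * q ^ m ≠ 1) {n j : ℕ} (hj : j ≤ n) :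
    (rrWeight q z (n + 2) j * q ^ j + rrWeight q z (n + 2) (j + 1)) * gb q n j =
      (rrWeight q (z * q) (n + 1) j + z * q * rrWeight q (z * q ^ 2) (n + 1) j) * gb q n j +
        (rrCorrection q z n j - rrCorrection q z n (j + 1)) := by
  obtain ⟨m, rfl⟩ := Nat.exists_eq_add_of_le hj
  have habs := one_sub_pow_mul_gb_succ q (j + m) j
  rw [Nat.add_sub_cancel_left] at habs
  have hne : ∀ k, 1 - z * q ^ k ≠ 0 := fun k => sub_ne_zero.mpr (h k).symm
  set Q := qPochhammer (z * q ^ (j + 2)) q (j + m)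
  have hQ : Q ≠ 0 :=
    qPochhammer_ne_zero (fun k => by simpa [mul_assoc, ← pow_add] using h (j + 2 + k)) _
  have hu : 1 - z * q ^ j ≠ 0 := hne j
  have hv : 1 - z * q ^ j * q ≠ 0 := by convert hne (j + 1) using 2; ring
  have hw : 1 - z * (q ^ j) ^ 2 * q ^ 2 * q ^ m ≠ 0 := by
    convert hne (2 * j + 2 + m) using 2; ring
  have d1 : qPochhammer (z * q ^ j) q (j + m + 2) = (1 - z * q ^ j) * (1 - z * q ^ j * q) * Q := by
    rw [qPochhammer_succ', qPochhammer_succ', show z * q ^ j * q * q = z * q ^ (j + 2) by ring]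
    ring
  have d2 : qPochhammer (z * q ^ (j + 1)) q (j + m + 2) =
      (1 - z * q ^ j * q) * Q * (1 - z * (q ^ j) ^ 2 * q ^ 2 * q ^ m) := by
    rw [qPochhammer_succ', qPochhammer_succ, show z * q ^ (j + 1) * q = z * q ^ (j + 2) by ring]
    ring
  have d3 : qPochhammer (z * q * q ^ j) q (j + m + 1) = (1 - z * q ^ j * q) * Q := by
    rw [qPochhammer_succ', show z * q * q ^ j * q = z * q ^ (j + 2) by ring]
    ring
  have d4 : qPochhammer (z * q ^ 2 * q ^ j) q (j + m + 1) =
      Q * (1 - z * (q ^ j) ^ 2 * q ^ 2 * q ^ m) := by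
    rw [qPochhammer_succ, show z * q ^ 2 * q ^ j = z * q ^ (j + 2) by ring]
    ring
  have hc1 : rrCoeff q (z * q) j = (q ^ j) ^ 2 * rrCoeff q z j := by
    simpa using rrCoeff_mul_pow q z 1 j
  simp only [rrWeight, rrCorrection, rrCoeff_succ, hc1, rrCoeff_mul_pow, d1, d2, d3, d4, habs]
  simp only [mul_add, mul_one, pow_add, pow_mul', pow_one]
  generalize q ^ j = x at *
  generalize q ^ m = y at *
  field_simp
  ring

theorem sum_rrWeight_mul_gb_succ (h : ∀ m, z * q ^ m ≠ 1) (n : ℕ) :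
    ∑ j ∈ range (n + 2), rrWeight q z (n + 2) j * gb q (n + 1) j =
      ∑ j ∈ range (n + 1), rrWeight q (z * q) (n + 1) j * gb q n j +
        z * q * ∑ j ∈ range (n + 1), rrWeight q (z * q ^ 2) (n + 1) j * gb q n j := by
  rw [sum_mul_gb_succ,
    sum_congr rfl fun j hj => rrWeight_pascal h (Nat.lt_succ_iff.mp (mem_range.mp hj)),
    sum_add_distrib, sum_range_sub', mul_sum, ← sum_add_distrib]
  simp only [rrCorrection, add_mul, mul_assoc, pow_zero, sub_self, zero_mul, mul_zero, zero_div,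
    gb_eq_zero_of_lt q (Nat.lt_succ_self n), add_zero]

theorem sum_pow_mul_gb_eq_sum_rrWeight_mul_gb (h : ∀ m, z * q ^ m ≠ 1) (n : ℕ) :
    ∑ j ∈ range (n + 1), z ^ j * q ^ (j ^ 2) * gb q n j =
      ∑ j ∈ range (n + 1), rrWeight q z (n + 1) j * gb q n j := by
  induction n generalizing z with
  | zero =>
    have hz : 1 - z ≠ 0 := sub_ne_zero.mpr fun e => h 0 (by simp [← e])
    simp [rrWeight, rrCoeff, qPochhammer, div_self hz]
  | succ n ih =>
    rw [sum_pow_mul_gb_succ, sum_rrWeight_mul_gb_succ h, ih fun m => ?_, ih fun m => ?_]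
    · simpa [mul_assoc, ← pow_add] using h (2 + m)
    · simpa [mul_assoc, ← pow_succ'] using h (m + 1)

end RogersRamanujan

/-- The finite Rogers–Ramanujan polynomial identity (Andrews, Bressoud, et al.):
`∑_{j=0}^n z^j q^{j²} [n,j]_q
  = ∑_{j=0}^n (-1)^j z^{2j} q^{j(5j-1)/2} (1-zq^{2j}) [n,j]_q / (zq^j;q)_{n+1}`,
stated over any field in which the denominators are nonzero (so it holds as an
identity of rational functions in `z` and `q`). -/
theorem finite_rogers_ramanujan {K : Type*} [Field K] (z q : K)
    (h : ∀ m : ℕ, z * q ^ m ≠ 1) (n : ℕ) :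
    ∑ j ∈ range (n+1), z^j * q^(j^2) * gb q n j =
      ∑ j ∈ range (n+1),
        (-1 : K)^j * z^(2*j) * q^(j*(5*j-1)/2) * (1 - z*q^(2*j)) * gb q n j
          / ∏ k ∈ range (n+1), (1 - z * q^j * q^k) := by
  rw [sum_pow_mul_gb_eq_sum_rrWeight_mul_gb h]
  exact sum_congr rfl fun j _ => div_mul_eq_mul_div _ _ _
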